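/- Let R be a commutative ring and g ≥ 1. The group Aut(X^{#2g}) of R-linear automorphisms of R^{2g} preserving λ_{2g} and ∂_{2g} is isomorphic, as a group, to the stabilizer in Sp_{2g}(R) of the first standard basis vector e₁ of R^{2g}. -/

import Mathlib

/-- The bilinear form of the formed space with boundary `X^{#n}`. -/
def lamX (R : Type) [CommRing R] (n : ℕ) (x y : Fin n → R) : R :=
  ∑ i : Fin n, ∑ j : Fin n, (if (i : ℕ) < (j : ℕ) then x i * y j
    else if (j : ℕ) < (i : ℕ) then -(x i * y j) else 0)

/-- The boundary map of `X^{#n}`. -/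
def bdX (R : Type) [CommRing R] (n : ℕ) (x : Fin n → R) : R := ∑ i, x i

/-- The standard symplectic form on `R^n` (interleaved hyperbolic pairs), i.e. the form of the
hyperbolic formed space `H^{⊕ g}` when `n = 2g`. -/
def omegaH (R : Type) [CommRing R] (n : ℕ) (x y : Fin n → R) : R :=
  ∑ i : Fin n, ∑ j : Fin n, (if (i : ℕ) % 2 = 0 ∧ (j : ℕ) = (i : ℕ) + 1 then x i * y j
    else if (j : ℕ) % 2 = 0 ∧ (i : ℕ) = (j : ℕ) + 1 then -(x i * y j) else 0)

/-- The symplectic group `Sp_n(R)`, as the subgroup of linear automorphisms of `R^n`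
preserving the standard symplectic form. -/
def SpGrp (R : Type) [CommRing R] (n : ℕ) : Subgroup ((Fin n → R) ≃ₗ[R] (Fin n → R)) where
  carrier := {A | ∀ x y, omegaH R n (A x) (A y) = omegaH R n x y}
  one_mem' := by intro x y; rfl
  mul_mem' := by
    intro a b ha hb x y
    show omegaH R n (a (b x)) (a (b y)) = omegaH R n x y
    rw [ha, hb]
  inv_mem' := by
    intro a ha x y
    show omegaH R n (a.symm x) (a.symm y) = omegaH R n x y
    conv_rhs => rw [← a.apply_symm_apply x, ← a.apply_symm_apply y]
    exact (ha _ _).symm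

/-- The automorphism group of the formed space with boundary `X^{#n}`, as the subgroup of
linear automorphisms of `R^n` preserving `λ_n` and `∂_n`. -/
def AutX (R : Type) [CommRing R] (n : ℕ) : Subgroup ((Fin n → R) ≃ₗ[R] (Fin n → R)) where
  carrier := {A | (∀ x y, lamX R n (A x) (A y) = lamX R n x y) ∧
    ∀ x, bdX R n (A x) = bdX R n x}
  one_mem' := ⟨fun _ _ => rfl, fun _ => rfl⟩
  mul_mem' := by
    intro a b ha hb
    refine ⟨fun x y => ?_, fun x => ?_⟩
    · show lamX R n (a (b x)) (a (b y)) = lamX R n x y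
      rw [ha.1, hb.1]
    · show bdX R n (a (b x)) = bdX R n x
      rw [ha.2, hb.2]
  inv_mem' := by
    intro a ha
    refine ⟨fun x y => ?_, fun x => ?_⟩
    · show lamX R n (a.symm x) (a.symm y) = lamX R n x y
      conv_rhs => rw [← a.apply_symm_apply x, ← a.apply_symm_apply y]
      exact (ha.1 _ _).symm
    · show bdX R n (a.symm x) = bdX R n x
      conv_rhs => rw [← a.apply_symm_apply x]
      exact (ha.2 _).symm

/-- The first standard basis vector `e₁` of `R^n`. -/
def stdE1 (R : Type) [CommRing R] (n : ℕ) : Fin n → R := fun i => if (i : ℕ) = 0 then 1 else 0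

/-- The stabilizer in `Sp_n(R)` of the first standard basis vector `e₁`. -/
def SpStabE1 (R : Type) [CommRing R] (n : ℕ) : Subgroup ((Fin n → R) ≃ₗ[R] (Fin n → R)) where
  carrier := {A | (∀ x y, omegaH R n (A x) (A y) = omegaH R n x y) ∧ A (stdE1 R n) = stdE1 R n}
  one_mem' := ⟨fun _ _ => rfl, rfl⟩
  mul_mem' := by
    intro a b ha hb
    refine ⟨fun x y => ?_, ?_⟩
    · show omegaH R n (a (b x)) (a (b y)) = omegaH R n x y
      rw [ha.1, hb.1]
    · show a (b (stdE1 R n)) = stdE1 R n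
      rw [hb.2, ha.2]
  inv_mem' := by
    intro a ha
    refine ⟨fun x y => ?_, ?_⟩
    · show omegaH R n (a.symm x) (a.symm y) = omegaH R n x y
      conv_rhs => rw [← a.apply_symm_apply x, ← a.apply_symm_apply y]
      exact (ha.1 _ _).symm
    · show a.symm (stdE1 R n) = stdE1 R n
      conv_lhs => rw [← ha.2]
      exact a.symm_apply_apply _

/-!
In the tail sums `s_m(x) = ∑_{j ≥ m} x_j` the form `λ_n` becomes the path form
`∑_i (s_{i-1} ∧ s_i)`, and grouping its terms in consecutive pairs exhibits a hyperbolic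
basis: for `n = 2g` the map `x ↦ (s_{2k-1} - s_{2k+1}, s_{2k})_k` carries `λ_{2g}` to the
standard symplectic form `ω` and `∂_{2g} = s_0` to `ω(e₁, -)`. It is surjective, hence
bijective (Orzech).
Conjugation by it identifies the automorphisms preserving `λ_{2g}` and `∂_{2g}` with the
symplectic ones preserving `ω(e₁, -)`, and since `ω` is nondegenerate these are exactly the ones
fixing `e₁`.
-/

open Finset

namespace FormedSpaceX

lemma sum_range_two_mul {M : Type*} [AddCommMonoid M] (g : ℕ) (f : ℕ → M) :
    ∑ i ∈ range (2 * g), f i = ∑ k ∈ range g, (f (2 * k) + f (2 * k + 1)) := by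
  induction g with
  | zero => simp
  | succ g ih =>
    rw [show 2 * (g + 1) = 2 * g + 1 + 1 by ring, sum_range_succ, sum_range_succ, sum_range_succ,
      ih, add_assoc]

lemma sum_range_ite_lt {M : Type*} [AddCommMonoid M] (n i : ℕ) (f : ℕ → M) :
    ∑ j ∈ range n, (if i < j then f j else 0) = ∑ j ∈ Ico (i + 1) n, f j := by
  rw [← sum_filter]
  congr 1
  ext j
  simp only [mem_filter, mem_range, mem_Ico]
  omega

lemma sum_range_sum_range_ite_adjacent {M : Type*} [AddCommMonoid M] (g : ℕ)
    (F : ℕ → ℕ → M) :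
    ∑ i ∈ range (2 * g), ∑ j ∈ range (2 * g),
      (if i % 2 = 0 ∧ j = i + 1 then F i j else 0) =
      ∑ k ∈ range g, F (2 * k) (2 * k + 1) := by
  rw [sum_range_two_mul]
  refine sum_congr rfl fun k hk => ?_
  have hk : 2 * k + 1 < 2 * g := by rw [mem_range] at hk; omega
  simp [hk, Nat.add_mod]

lemma sum_range_sum_range_ite_adjacent' {M : Type*} [AddCommMonoid M] (g : ℕ)
    (F : ℕ → ℕ → M) :
    ∑ i ∈ range (2 * g), ∑ j ∈ range (2 * g),
      (if j % 2 = 0 ∧ i = j + 1 then F i j else 0) =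
      ∑ k ∈ range g, F (2 * k + 1) (2 * k) := by
  rw [sum_comm, sum_range_sum_range_ite_adjacent g fun j i => F i j]

variable {R : Type} [CommRing R]

def zeroExtend {n : ℕ} (x : Fin n → R) (i : ℕ) : R := if h : i < n then x ⟨i, h⟩ else 0

section zeroExtend

variable {n : ℕ}

@[simp]
lemma zeroExtend_val (x : Fin n → R) (i : Fin n) : zeroExtend x i = x i := dif_pos i.isLt

lemma zeroExtend_of_le (x : Fin n → R) {i : ℕ} (h : n ≤ i) : zeroExtend x i = 0 :=
  dif_neg (by omega)

@[simp]
lemma zeroExtend_add (x y : Fin n → R) (i : ℕ) :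
    zeroExtend (x + y) i = zeroExtend x i + zeroExtend y i := by
  unfold zeroExtend; split_ifs <;> simp

@[simp]
lemma zeroExtend_smul (r : R) (x : Fin n → R) (i : ℕ) :
    zeroExtend (r • x) i = r * zeroExtend x i := by
  unfold zeroExtend; split_ifs <;> simp

end zeroExtend

lemma bdX_eq (n : ℕ) (x : Fin n → R) : bdX R n x = ∑ i ∈ range n, zeroExtend x i := by
  simp [bdX, ← Fin.sum_univ_eq_sum_range]

def tailSum {n : ℕ} (x : Fin n → R) (m : ℕ) : R := ∑ j ∈ Ico m n, zeroExtend x j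

section tailSum

variable {n : ℕ} (x : Fin n → R)

lemma tailSum_of_le {m : ℕ} (h : n ≤ m) : tailSum x m = 0 := by
  simp [tailSum, Ico_eq_empty_of_le h]

lemma tailSum_sub_tailSum_succ (m : ℕ) : tailSum x m - tailSum x (m + 1) = zeroExtend x m := by
  rcases lt_or_ge m n with h | h
  · rw [tailSum, sum_eq_sum_Ico_succ_bot h, tailSum, add_sub_cancel_right]
  · rw [tailSum_of_le x h, tailSum_of_le x (by omega), zeroExtend_of_le x h, sub_zero]

lemma tailSum_telescope (τ : ℕ → R) (hτ : τ n = 0) {m : ℕ} (hm : m ≤ n) :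
    tailSum (fun i : Fin n => τ i - τ (i + 1)) m = τ m := by
  have hterm : ∀ j ∈ Ico m n,
      zeroExtend (fun i : Fin n => τ i - τ (i + 1)) j = -(τ (j + 1) - τ j) := by
    intro j hj
    rw [zeroExtend, dif_pos (mem_Ico.mp hj).2, neg_sub]
  rw [tailSum, sum_congr rfl hterm, sum_neg_distrib, sum_Ico_sub _ hm, hτ, zero_sub, neg_neg]

end tailSum

lemma lamX_eq_sum_tailSum (n : ℕ) (x y : Fin n → R) :
    lamX R n x y = ∑ i ∈ range n,
      (zeroExtend x i * tailSum y (i + 1) - tailSum x (i + 1) * zeroExtend y i) := by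
  have hsplit : lamX R n x y = ∑ i ∈ range n, ∑ j ∈ range n,
      (if i < j then zeroExtend x i * zeroExtend y j else 0) -
      ∑ i ∈ range n, ∑ j ∈ range n,
        (if j < i then zeroExtend x i * zeroExtend y j else 0) := by
    simp only [lamX, ← Fin.sum_univ_eq_sum_range, zeroExtend_val, ← sum_sub_distrib]
    refine sum_congr rfl fun i _ => sum_congr rfl fun j _ => ?_
    split_ifs <;> first | ring1 | (exfalso; omega)
  rw [hsplit, sum_comm (s := range n) (t := range n) (f := fun i j => if j < i then _ else _),
    ← sum_sub_distrib]
  refine sum_congr rfl fun i _ => ?_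
  simp only [sum_range_ite_lt, tailSum, mul_sum, sum_mul]

lemma lamX_eq_sum_tailSum_tailSum (n : ℕ) (x y : Fin n → R) :
    lamX R n x y = ∑ i ∈ range n,
      (tailSum x (i - 1) * tailSum y i - tailSum x i * tailSum y (i - 1)) := by
  set F : ℕ → R := fun i => tailSum x (i - 1) * tailSum y i - tailSum x i * tailSum y (i - 1)
  have hshift : ∑ i ∈ range n, F (i + 1) = ∑ i ∈ range n, F i := by
    have h0 : F 0 = 0 := sub_self _
    have hn : F n = 0 := by simp [F, tailSum_of_le x le_rfl, tailSum_of_le y le_rfl]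
    have := sum_range_succ' F n
    rw [sum_range_succ, hn, h0] at this
    simpa using this.symm
  rw [← hshift, lamX_eq_sum_tailSum]
  refine sum_congr rfl fun i _ => ?_
  simp only [F, Nat.add_sub_cancel, ← tailSum_sub_tailSum_succ]
  ring

lemma omegaH_eq (g : ℕ) (x y : Fin (2 * g) → R) :
    omegaH R (2 * g) x y = ∑ k ∈ range g,
      (zeroExtend x (2 * k) * zeroExtend y (2 * k + 1) -
        zeroExtend x (2 * k + 1) * zeroExtend y (2 * k)) := by
  have hsplit : omegaH R (2 * g) x y = ∑ i ∈ range (2 * g), ∑ j ∈ range (2 * g),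
      (if i % 2 = 0 ∧ j = i + 1 then zeroExtend x i * zeroExtend y j else 0) -
      ∑ i ∈ range (2 * g), ∑ j ∈ range (2 * g),
        (if j % 2 = 0 ∧ i = j + 1 then zeroExtend x i * zeroExtend y j else 0) := by
    simp only [omegaH, ← Fin.sum_univ_eq_sum_range, zeroExtend_val, ← sum_sub_distrib]
    refine sum_congr rfl fun i _ => sum_congr rfl fun j _ => ?_
    split_ifs <;> first | ring1 | (exfalso; omega)
  rw [hsplit, sum_range_sum_range_ite_adjacent, sum_range_sum_range_ite_adjacent',
    ← sum_sub_distrib]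

def interleave {g : ℕ} (e o : ℕ → R) : Fin (2 * g) → R :=
  fun i => if (i : ℕ) % 2 = 0 then e (i / 2) else o (i / 2)

section interleave

variable {g k : ℕ} (e o : ℕ → R)

lemma zeroExtend_interleave_two_mul (hk : k < g) :
    zeroExtend (interleave (g := g) e o) (2 * k) = e k := by
  rw [zeroExtend, dif_pos (by omega), interleave]
  simp

lemma zeroExtend_interleave_two_mul_add_one (hk : k < g) :
    zeroExtend (interleave (g := g) e o) (2 * k + 1) = o k := by
  rw [zeroExtend, dif_pos (by omega), interleave]
  simp [Nat.add_mod, Nat.add_div]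

lemma omegaH_interleave (e' o' : ℕ → R) :
    omegaH R (2 * g) (interleave e o) (interleave e' o') =
      ∑ k ∈ range g, (e k * o' k - o k * e' k) := by
  rw [omegaH_eq]
  refine sum_congr rfl fun k hk => ?_
  rw [mem_range] at hk
  simp only [zeroExtend_interleave_two_mul _ _ hk, zeroExtend_interleave_two_mul_add_one _ _ hk]

lemma interleave_eq {u : Fin (2 * g) → R} (he : ∀ k < g, e k = zeroExtend u (2 * k))
    (ho : ∀ k < g, o k = zeroExtend u (2 * k + 1)) : interleave e o = u := by
  ext i
  have := i.isLt
  rw [interleave]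
  split_ifs with h
  · rw [he _ (by omega), Nat.mul_div_cancel' (Nat.dvd_of_mod_eq_zero h), zeroExtend_val]
  · rw [ho _ (by omega), show 2 * ((i : ℕ) / 2) + 1 = i by omega, zeroExtend_val]

end interleave

lemma omegaH_injective (g : ℕ) : Function.Injective (omegaH R (2 * g)) := by
  have hdot : ∀ w z : Fin (2 * g) → R, omegaH R (2 * g) w
      (interleave (fun k => -zeroExtend z (2 * k + 1)) (fun k => zeroExtend z (2 * k))) =
      w ⬝ᵥ z := by
    intro w z
    have hsum : w ⬝ᵥ z = ∑ i ∈ range (2 * g), zeroExtend w i * zeroExtend z i := by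
      simp [dotProduct, ← Fin.sum_univ_eq_sum_range]
    rw [omegaH_eq, hsum, sum_range_two_mul]
    refine sum_congr rfl fun k hk => ?_
    rw [mem_range] at hk
    rw [zeroExtend_interleave_two_mul _ _ hk, zeroExtend_interleave_two_mul_add_one _ _ hk]
    ring
  intro u v h
  exact dotProduct_eq u v fun z => by rw [← hdot, ← hdot, h]

-- At `k = 0` the truncated `2 * k - 1 = 0` makes the first coordinate `tailSum x 0 - tailSum x 1`.
def hyperbolicCoords (g : ℕ) : (Fin (2 * g) → R) →ₗ[R] (Fin (2 * g) → R) where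
  toFun x := interleave (fun k => tailSum x (2 * k - 1) - tailSum x (2 * k + 1))
    (fun k => tailSum x (2 * k))
  map_add' x y := by
    ext i
    simp only [interleave, tailSum, zeroExtend_add, sum_add_distrib, Pi.add_apply]
    split_ifs <;> ring
  map_smul' r x := by
    ext i
    simp only [interleave, tailSum, zeroExtend_smul, ← mul_sum, Pi.smul_apply, smul_eq_mul,
      RingHom.id_apply]
    split_ifs <;> ring

lemma hyperbolicCoords_apply (g : ℕ) (x : Fin (2 * g) → R) :
    hyperbolicCoords g x = interleave (fun k => tailSum x (2 * k - 1) - tailSum x (2 * k + 1))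
      (fun k => tailSum x (2 * k)) := rfl

lemma omegaH_hyperbolicCoords (g : ℕ) (x y : Fin (2 * g) → R) :
    omegaH R (2 * g) (hyperbolicCoords g x) (hyperbolicCoords g y) = lamX R (2 * g) x y := by
  rw [hyperbolicCoords_apply, hyperbolicCoords_apply, omegaH_interleave,
    lamX_eq_sum_tailSum_tailSum, sum_range_two_mul]
  refine sum_congr rfl fun k _ => ?_
  simp only [Nat.add_sub_cancel]
  ring

lemma omegaH_stdE1 {g : ℕ} (hg : 1 ≤ g) (v : Fin (2 * g) → R) :
    omegaH R (2 * g) (stdE1 R (2 * g)) v = zeroExtend v 1 := by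
  rw [omegaH_eq, sum_eq_single 0]
  · simp [zeroExtend, stdE1, show 0 < g by omega]
  · intro k _ hk
    simp [zeroExtend, stdE1, hk]
  · intro h
    simp at h
    omega

lemma omegaH_stdE1_hyperbolicCoords {g : ℕ} (hg : 1 ≤ g) (x : Fin (2 * g) → R) :
    omegaH R (2 * g) (stdE1 R (2 * g)) (hyperbolicCoords g x) = bdX R (2 * g) x := by
  rw [omegaH_stdE1 hg, hyperbolicCoords_apply,
    zeroExtend_interleave_two_mul_add_one (k := 0) _ _ (by omega), bdX_eq, range_eq_Ico]
  rfl

lemma hyperbolicCoords_surjective (g : ℕ) :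
    Function.Surjective (hyperbolicCoords (R := R) g) := by
  intro u
  -- `τ m` is the tail sum `s_m` of the preimage, obtained by solving
  -- `s_{2k-1} - s_{2k+1} = u (2k)`, `s_{2k} = u (2k+1)` for the `s_m`.
  set τ : ℕ → R := fun m => if m % 2 = 0 then zeroExtend u (m + 1)
    else zeroExtend u 1 - ∑ j ∈ range ((m + 1) / 2), zeroExtend u (2 * j)
  have hτ : τ (2 * g) = 0 := by simp [τ, zeroExtend_of_le]
  refine ⟨fun i => τ i - τ (i + 1), ?_⟩
  rw [hyperbolicCoords_apply]
  refine interleave_eq _ _ (fun k hk => ?_) (fun k hk => ?_)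
  · rw [tailSum_telescope τ hτ (by omega), tailSum_telescope τ hτ (by omega)]
    rcases k with _ | k
    · simp [τ]
    · simp [τ, show 2 * (k + 1) - 1 = 2 * k + 1 by omega, Nat.add_mod,
        show (2 * (k + 1) + 1 + 1) / 2 = k + 1 + 1 by omega,
        show (2 * k + 1 + 1) / 2 = k + 1 by omega, sum_range_succ _ (k + 1)]
  · rw [tailSum_telescope τ hτ (by omega)]
    simp [τ]

noncomputable def hyperbolicEquiv (g : ℕ) : (Fin (2 * g) → R) ≃ₗ[R] (Fin (2 * g) → R) :=
  LinearEquiv.ofBijective (hyperbolicCoords g)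
    (OrzechProperty.bijective_of_surjective_endomorphism _ (hyperbolicCoords_surjective g))

lemma apply_eq_self_iff_forall {α β F : Type*} [EquivLike F α α] {ω : α → α → β}
    (hω : Function.Injective ω) {b : F} (hb : ∀ x y, ω (b x) (b y) = ω x y) (e : α) :
    b e = e ↔ ∀ y, ω e (b y) = ω e y := by
  refine ⟨fun he y => by rw [← hb e y, he], fun h => hω (funext fun z => ?_)⟩
  obtain ⟨y, rfl⟩ := EquivLike.surjective b z
  rw [hb, h]

lemma conj_mem_AutX_iff {g : ℕ} (t : (Fin (2 * g) → R) ≃ₗ[R] (Fin (2 * g) → R))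
    (hlam : ∀ x y, omegaH R (2 * g) (t x) (t y) = lamX R (2 * g) x y)
    (hbd : ∀ x, omegaH R (2 * g) (stdE1 R (2 * g)) (t x) = bdX R (2 * g) x)
    (b : (Fin (2 * g) → R) ≃ₗ[R] (Fin (2 * g) → R)) :
    t⁻¹ * b * t ∈ AutX R (2 * g) ↔ b ∈ SpStabE1 R (2 * g) := by
  have hconj : ∀ x, t ((t⁻¹ * b * t) x) = b (t x) := fun x => t.apply_symm_apply _
  have hform :
      (∀ x y, lamX R (2 * g) ((t⁻¹ * b * t) x) ((t⁻¹ * b * t) y) = lamX R (2 * g) x y) ↔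
      ∀ x y, omegaH R (2 * g) (b x) (b y) = omegaH R (2 * g) x y := by
    simp only [← hlam, hconj]
    exact (t.surjective.forall₂ (p := fun u v => omegaH R _ (b u) (b v) = omegaH R _ u v)).symm
  have hboundary : (∀ x, bdX R (2 * g) ((t⁻¹ * b * t) x) = bdX R (2 * g) x) ↔
      ∀ y, omegaH R (2 * g) (stdE1 R (2 * g)) (b y) = omegaH R (2 * g) (stdE1 R (2 * g)) y := by
    simp only [← hbd, hconj]
    exact (t.surjective.forall (p := fun u => omegaH R _ (stdE1 R _) (b u) = omegaH R _ _ u)).symm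
  show _ ∧ _ ↔ _ ∧ _
  rw [hform, hboundary]
  exact and_congr_right fun hb => (apply_eq_self_iff_forall (omegaH_injective g) hb _).symm

end FormedSpaceX

/-- the automorphism group of `X^{#2g}` is isomorphic, as a group, to the
stabilizer in `Sp_{2g}(R)` of the first standard basis vector `e₁` of `R^{2g}`. -/
theorem autX_even_iso_SpStab (R : Type) [CommRing R] (g : ℕ) (hg : 1 ≤ g) :
    Nonempty (↥(AutX R (2 * g)) ≃* ↥(SpStabE1 R (2 * g))) := by
  set t := FormedSpaceX.hyperbolicEquiv (R := R) g
  have hmap : (AutX R (2 * g)).map (MulAut.conj t).toMonoidHom = SpStabE1 R (2 * g) := by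
    ext b
    rw [Subgroup.mem_map_equiv, MulAut.conj_symm_apply]
    exact FormedSpaceX.conj_mem_AutX_iff t (FormedSpaceX.omegaH_hyperbolicCoords g)
      (FormedSpaceX.omegaH_stdE1_hyperbolicCoords hg) b
  exact ⟨((MulAut.conj t).subgroupMap _).trans (MulEquiv.subgroupCongr hmap)⟩
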